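/- arXiv:2407.00680 — 3 statements merged into one kernel-verified Lean document; each statement's English description precedes it below -/
import Mathlib

section
/- The complement of the totality problem is not recursively enumerable: the predicate on codes e asserting that φ_e(n) is undefined for some input n is not semidecidable. -/
/-!
Precomposing a code `c` with the constant code `0` yields a code whose value at every input is
`c.eval 0`, so it fails to be total exactly when `c` diverges at `0`. This computable reduction
would make the complement of the halting problem at `0` recursively enumerable, which it is not.
-/

open Nat.Partrec

theorem REPred.comp {α β : Type*} [Primcodable α] [Primcodable β] {p : β → Prop} {f : α → β}
    (hp : REPred p) (hf : Computable f) : REPred fun a => p (f a) :=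
  Partrec.comp hp hf

theorem Nat.Partrec.Code.eval_comp_const (c : Code) (m n : ℕ) :
    (c.comp (Code.const m)).eval n = c.eval m := by
  simp only [Code.eval, Code.eval_const]
  exact Part.bind_some m c.eval

theorem Nat.Partrec.Code.computable_comp_const (m : ℕ) :
    Computable fun c : Code => c.comp (Code.const m) :=
  (Code.primrec₂_comp.comp _root_.Primrec.id (_root_.Primrec.const _)).to_comp

/-- The complement of the totality problem is not recursively enumerable. -/
theorem totality_problem_complement_not_re :
    ¬ REPred fun e : Nat.Partrec.Code => ∃ n : ℕ, ¬ (e.eval n).Dom := by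
  intro h
  apply ComputablePred.halting_problem_not_re 0
  refine (h.comp (Code.computable_comp_const 0)).of_eq fun c => ?_
  simp only [Code.eval_comp_const, exists_const]
end

section
/- The totality problem is not many-one reducible to the halting problem: it is not the case that Tot = {e | ∀ n, φ_e(n) is defined} ≤ₘ K₀ = {(e, x) | φ_e(x) is defined}. -/
/-!
The halting set is r.e., and r.e. predicates are closed downwards under `≤₀`. On the other hand
the complement of halting on a fixed input `n` reduces to totality: send `c` to a code that on
input `m` diverges exactly when `c` halts on `n` within `m` steps. A reduction of totality to
halting would therefore make non-halting on `n` r.e., which it is not.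
-/

open Nat.Partrec (Code)
open Nat.Partrec.Code

theorem rePred_of_manyOneReducible {α β : Type*} [Primcodable α] [Primcodable β]
    {p : α → Prop} {q : β → Prop} (hpq : p ≤₀ q) (hq : REPred q) : REPred p := by
  obtain ⟨f, hf, hpf⟩ := hpq
  exact REPred.of_eq (hq.comp hf) fun a => (hpf a).symm

theorem Nat.Partrec.Code.exists_computable_code {α : Type*} [Primcodable α] {f : α → ℕ →. ℕ}
    (hf : Partrec₂ f) : ∃ F : α → Code, Computable F ∧ ∀ a, eval (F a) = f a := by
  let g : ℕ →. ℕ := fun p =>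
    (Part.ofOption (Encodable.decode (α := α) p.unpair.1)).bind fun a => f a p.unpair.2
  have hg : Nat.Partrec g := Partrec.nat_iff.1 <|
    (Computable.ofOption (Computable.decode.comp (Computable.fst.comp Computable.unpair))).bind
      (hf.comp Computable.snd (Computable.snd.comp (Computable.unpair.comp Computable.fst)))
  obtain ⟨c, hc⟩ := exists_code.1 hg
  refine ⟨fun a => curry c (Encodable.encode a),
    (primrec₂_curry.comp (_root_.Primrec.const c) _root_.Primrec.encode).to_comp, fun a => ?_⟩
  funext m
  simp [eval_curry, hc, g]

theorem Nat.Partrec.Code.eval_dom_iff_exists_evaln_isSome (c : Code) (n : ℕ) :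
    (eval c n).Dom ↔ ∃ k, (evaln k c n).isSome := by
  simp only [Part.dom_iff_mem, evaln_complete, Option.isSome_iff_exists]
  exact exists_comm

theorem not_haltsOn_manyOneReducible_total (n : ℕ) :
    (fun c : Code => ¬(eval c n).Dom) ≤₀ fun c : Code => ∀ m, (eval c m).Dom := by
  have hf : Partrec₂ fun (c : Code) (m : ℕ) =>
      cond (evaln m c n).isSome Part.none (Part.some 0) := by
    have hstep : Computable₂ fun (c : Code) (m : ℕ) => (evaln m c n).isSome :=
      (Primrec.option_isSome.comp (primrec_evaln.comp
        ((Primrec.snd.pair Primrec.fst).pair (Primrec.const n)))).to_comp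
    exact Partrec.cond hstep Partrec.none (Computable.const 0).partrec
  obtain ⟨F, hF, hFf⟩ := exists_computable_code hf
  refine ⟨F, hF, fun c => ?_⟩
  simp only [hFf, eval_dom_iff_exists_evaln_isSome, not_exists]
  refine forall_congr' fun m => ?_
  cases (evaln m c n).isSome <;> simp

/-- The totality problem is not many-one reducible to the halting problem. -/
theorem totality_not_manyOneReducible_halting :
    ¬ (fun e : Nat.Partrec.Code => ∀ n : ℕ, (e.eval n).Dom) ≤₀
      (fun p : Nat.Partrec.Code × ℕ => (p.1.eval p.2).Dom) := fun h =>
  ComputablePred.halting_problem_not_re 0 <|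
    rePred_of_manyOneReducible ((not_haltsOn_manyOneReducible_total 0).trans h) eval_part.dom_re
end

section
/- Addition of computable real numbers is not uniformly computable on binary digit representations: there is no total computable function g : ℕ → ℕ such that for all codes a and b which are total with all outputs in {0, 1} and which satisfy val(a) + val(b) < 1, the code (with number) g(⟨a, b⟩) is total with all outputs in {0, 1} and val(g(⟨a, b⟩)) = val(a) + val(b). Here val(e) denotes the real number Σₙ φ_e(n) / 2^(n+1). -/
open scoped Classical

/-- A code `e` is total with all outputs in `{0, 1}`: for every `n`, `φ_e(n)` is defined and
equals `0` or `1`; such a code represents a binary digit expansion. -/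
def Total01 (e : Nat.Partrec.Code) : Prop :=
  ∀ n : ℕ, ∃ b : ℕ, b ∈ e.eval n ∧ (b = 0 ∨ b = 1)

/-- The real number `val(e) = Σₙ φ_e(n) / 2^(n+1)` represented by a code `e`
(reading the outputs of `e` as binary digits). -/
noncomputable def codeVal (e : Nat.Partrec.Code) : ℝ :=
  ∑' n : ℕ, (((e.eval n).toOption.getD 0 : ℕ) : ℝ) / 2 ^ (n + 1)

/-!
Suppose `g` computed addition. Let `a` code the digits `0.0101…` of `1 / 3`. By the recursion
theorem there is a code `b` which knows the code `c = g ⟨a, b⟩` of the sum: `b` outputs the digits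
`0.00101…` of `1 / 6`, so that the sum is `1 / 2`, while simulating `c` on input `0`. If the first
digit `d` of `c` shows up after `N` steps, `b` switches to the constant digit `1 - d` from
position `N` on. For `d = 0` this gives `val c ≤ 1 / 2 < val a + val b`, and for `d = 1` it gives
`val a + val b < 1 / 2 ≤ val c`.
-/

open Nat.Partrec (Code)

noncomputable def binVal (d : ℕ → ℕ) : ℝ :=
  ∑' n : ℕ, (d n : ℝ) / 2 ^ (n + 1)

section binVal

variable {d e : ℕ → ℕ}

lemma summable_digit_div_two_pow (hd : ∀ n, d n ≤ 1) :
    Summable fun n : ℕ => (d n : ℝ) / 2 ^ (n + 1) := by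
  refine (summable_geometric_two' 1).of_nonneg_of_le (fun n => by positivity) fun n => ?_
  rw [div_div, ← pow_succ']
  gcongr
  exact_mod_cast hd n

lemma binVal_mono (h : ∀ n, d n ≤ e n) (he : ∀ n, e n ≤ 1) : binVal d ≤ binVal e :=
  (summable_digit_div_two_pow fun n => (h n).trans (he n)).tsum_le_tsum
    (fun n => by gcongr; exact_mod_cast h n) (summable_digit_div_two_pow he)

lemma binVal_lt_binVal (h : ∀ n, d n ≤ e n) (he : ∀ n, e n ≤ 1) {m : ℕ} (hm : d m < e m) :
    binVal d < binVal e :=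
  (summable_digit_div_two_pow fun n => (h n).trans (he n)).tsum_lt_tsum
    (fun n => by gcongr; exact_mod_cast h n) (by gcongr) (summable_digit_div_two_pow he)

lemma binVal_add (hd : ∀ n, d n ≤ 1) (he : ∀ n, e n ≤ 1) :
    binVal (fun n => d n + e n) = binVal d + binVal e := by
  simp only [binVal, Nat.cast_add, add_div]
  exact (summable_digit_div_two_pow hd).tsum_add (summable_digit_div_two_pow he)

/-- The binary digits `0.0111…` of `1 / 2`. -/
def halfDig (n : ℕ) : ℕ := if n = 0 then 0 else 1

lemma halfDig_le_one (n : ℕ) : halfDig n ≤ 1 := by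
  unfold halfDig; split <;> omega

lemma binVal_halfDig : binVal halfDig = 1 / 2 := by
  rw [binVal, (summable_digit_div_two_pow halfDig_le_one).tsum_eq_zero_add]
  simp only [halfDig, Nat.add_eq_zero_iff, one_ne_zero, and_false, if_false, if_true,
    Nat.cast_zero, Nat.cast_one, zero_div, zero_add]
  rw [← tsum_geometric_two' (1 / 2)]
  congr 1 with n
  ring

lemma binVal_le_half (hd : ∀ n, d n ≤ 1) (h0 : d 0 = 0) : binVal d ≤ 1 / 2 :=
  binVal_halfDig ▸ binVal_mono (fun n => by unfold halfDig; split <;> simp_all) halfDig_le_one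

lemma half_le_binVal (hd : ∀ n, d n ≤ 1) (h0 : d 0 = 1) : 1 / 2 ≤ binVal d := by
  simpa [binVal, h0] using (summable_digit_div_two_pow hd).le_tsum 0 fun n _ => by positivity

end binVal

namespace Nat.Partrec.Code

lemma exists_eval_eq_some_self {F : Code → ℕ → ℕ} (hF : Computable₂ F) :
    ∃ b : Code, ∀ n, b.eval n = Part.some (F b n) := by
  obtain ⟨b, hb⟩ := fixed_point₂ hF.partrec₂
  exact ⟨b, fun n => by rw [hb]; rfl⟩

end Nat.Partrec.Code

section codes

variable {e : Code} {f : ℕ → ℕ}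

lemma codeVal_eq_binVal (h : ∀ n, e.eval n = Part.some (f n)) : codeVal e = binVal f := by
  simp only [codeVal, binVal, h, Part.toOption, Part.some_dom, dite_true, Part.get_some,
    Option.getD_some]

lemma total01_iff :
    Total01 e ↔ ∃ f : ℕ → ℕ, (∀ n, e.eval n = Part.some (f n)) ∧ ∀ n, f n ≤ 1 := by
  simp only [Total01, ← Nat.le_one_iff_eq_zero_or_eq_one, ← Part.eq_some_iff]
  exact ⟨fun h => by choose f hf using h; exact ⟨f, fun n => (hf n).1, fun n => (hf n).2⟩,
    fun ⟨f, hf, hf1⟩ n => ⟨f n, hf n, hf1 n⟩⟩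

end codes

def thirdDig (n : ℕ) : ℕ := n % 2

def sixthDig (n : ℕ) : ℕ := if n = 0 then 0 else (n + 1) % 2

lemma thirdDig_le_one (n : ℕ) : thirdDig n ≤ 1 := by unfold thirdDig; omega

lemma primrec_thirdDig : Primrec thirdDig :=
  Primrec.nat_mod.comp .id (.const 2)

lemma sixthDig_le_one (n : ℕ) : sixthDig n ≤ 1 := by unfold sixthDig; split <;> omega

lemma primrec_sixthDig : Primrec sixthDig :=
  Primrec.ite (Primrec.eq.comp .id (.const 0)) (.const 0)
    (Primrec.nat_mod.comp .succ (.const 2))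

lemma binVal_thirdDig_lt_half : binVal thirdDig < 1 / 2 :=
  binVal_halfDig ▸ binVal_lt_binVal (m := 2)
    (fun n => by unfold thirdDig halfDig; split <;> omega) halfDig_le_one (by decide)

lemma binVal_thirdDig_add_binVal_sixthDig : binVal thirdDig + binVal sixthDig = 1 / 2 := by
  rw [← binVal_add thirdDig_le_one sixthDig_le_one, ← binVal_halfDig]
  congr 1 with n
  unfold thirdDig sixthDig halfDig
  split_ifs <;> omega

def diagDig (c : Code) (n : ℕ) : ℕ :=
  ((c.evaln n 0).map fun d => 1 - d).getD (sixthDig n)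

lemma primrec₂_diagDig : Primrec₂ diagDig :=
  Primrec.option_getD.comp
    (Primrec.option_map
      (Code.primrec_evaln.comp ((Primrec.snd.pair .fst).pair (.const 0)))
      (Primrec.nat_sub.comp (.const 1) .snd))
    (primrec_sixthDig.comp .snd)

section diagDig

variable {c : Code} {d : ℕ}

lemma diagDig_le_one (c : Code) (n : ℕ) : diagDig c n ≤ 1 := by
  unfold diagDig
  cases c.evaln n 0 <;> simp [sixthDig_le_one]

lemma diagDig_zero (c : Code) : diagDig c 0 = 0 := by
  simp [diagDig, Code.evaln, sixthDig]

lemma binVal_diagDig_le_half : binVal (diagDig c) ≤ 1 / 2 :=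
  binVal_le_half (diagDig_le_one c) (diagDig_zero c)

lemma diagDig_eq_sixthDig_or (hd : d ∈ c.eval 0) (n : ℕ) :
    diagDig c n = sixthDig n ∨ diagDig c n = 1 - d := by
  unfold diagDig
  rcases h : c.evaln n 0 with _ | d'
  · simp
  · rw [Part.mem_unique (Code.evaln_sound h) hd]
    simp

lemma exists_diagDig_eq (hd : d ∈ c.eval 0) : ∃ N, ∀ n ≥ N, diagDig c n = 1 - d := by
  obtain ⟨N, hN⟩ := Code.evaln_complete.1 hd
  refine ⟨N, fun n hn => ?_⟩
  simp [diagDig, Option.mem_def.1 (Code.evaln_mono hn hN)]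

lemma binVal_sixthDig_lt_binVal_diagDig (hd : 0 ∈ c.eval 0) :
    binVal sixthDig < binVal (diagDig c) := by
  obtain ⟨N, hN⟩ := exists_diagDig_eq hd
  refine binVal_lt_binVal (m := 2 * N + 1) (fun n => ?_) (diagDig_le_one c) ?_
  · rcases diagDig_eq_sixthDig_or hd n with h | h <;> rw [h]
    exact sixthDig_le_one n
  · rw [hN _ (by omega), sixthDig, if_neg (by omega)]; omega

lemma binVal_diagDig_lt_binVal_sixthDig (hd : 1 ∈ c.eval 0) :
    binVal (diagDig c) < binVal sixthDig := by
  obtain ⟨N, hN⟩ := exists_diagDig_eq hd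
  refine binVal_lt_binVal (m := 2 * N + 2) (fun n => ?_) sixthDig_le_one ?_
  · rcases diagDig_eq_sixthDig_or hd n with h | h <;> rw [h]
    exact Nat.zero_le _
  · rw [hN _ (by omega), sixthDig, if_neg (by omega)]; omega

end diagDig

/-- Addition of computable real numbers is not uniformly computable on binary digit
representations: there is no total computable `g : ℕ → ℕ` which, given (the numbers of) codes
`a`, `b` of binary digit expansions with `val(a) + val(b) < 1`, returns the number of a code of
a binary digit expansion of `val(a) + val(b)`. -/
theorem addition_not_uniformly_computable :
    ¬ ∃ g : ℕ → ℕ, Computable g ∧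
      ∀ a b : Nat.Partrec.Code, Total01 a → Total01 b → codeVal a + codeVal b < 1 →
        Total01 (Denumerable.ofNat Nat.Partrec.Code
            (g (Nat.pair (Encodable.encode a) (Encodable.encode b)))) ∧
          codeVal (Denumerable.ofNat Nat.Partrec.Code
            (g (Nat.pair (Encodable.encode a) (Encodable.encode b)))) =
            codeVal a + codeVal b := by
  rintro ⟨g, hg, H⟩
  obtain ⟨a, ha⟩ := Code.exists_eval_eq_some_self (F := fun _ => thirdDig)
    (primrec_thirdDig.comp .snd).to_comp
  have hsumCode : Computable fun b : Code =>
      Denumerable.ofNat Code (g (Nat.pair (Encodable.encode a) (Encodable.encode b))) :=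
    (Computable.ofNat _).comp (hg.comp (Primrec₂.natPair.to_comp.comp (.const _) .encode))
  obtain ⟨b, hb⟩ := Code.exists_eval_eq_some_self
    (F := fun b => diagDig (Denumerable.ofNat Code
      (g (Nat.pair (Encodable.encode a) (Encodable.encode b)))))
    (primrec₂_diagDig.to_comp.comp (hsumCode.comp .fst) .snd)
  have hab : codeVal a + codeVal b < 1 := by
    rw [codeVal_eq_binVal ha, codeVal_eq_binVal hb]
    exact (add_lt_add_of_lt_of_le binVal_thirdDig_lt_half binVal_diagDig_le_half).trans_eq
      (by norm_num)
  obtain ⟨hc, hc_val⟩ := H a b (total01_iff.2 ⟨_, ha, thirdDig_le_one⟩)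
    (total01_iff.2 ⟨_, hb, diagDig_le_one _⟩) hab
  obtain ⟨f, hf, hf_le⟩ := total01_iff.1 hc
  rw [codeVal_eq_binVal hf, codeVal_eq_binVal ha, codeVal_eq_binVal hb] at hc_val
  have hf0 : f 0 ∈ _ := Part.eq_some_iff.1 (hf 0)
  have hhalf := binVal_thirdDig_add_binVal_sixthDig
  rcases Nat.le_one_iff_eq_zero_or_eq_one.1 (hf_le 0) with h0 | h1
  · linarith [binVal_le_half hf_le h0, binVal_sixthDig_lt_binVal_diagDig (h0 ▸ hf0)]
  · linarith [half_le_binVal hf_le h1, binVal_diagDig_lt_binVal_sixthDig (h1 ▸ hf0)]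
end
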